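/- The Grothendieck constant of the circuit C_n of length n >= 3 equals (n/(n-2))·cos(pi/n). -/

import Mathlib

open Finset Real
open scoped Classical Pointwise

noncomputable section

variable {V : Type*} [Fintype V] [LinearOrder V]

/-- Sum over the edges of `G` (pairs `i < j` with `G.Adj i j`) of `w i j * x i j`. -/
def edgeSum (G : SimpleGraph V) (w : V → V → ℝ) (x : V → V → ℝ) : ℝ :=
  ∑ i, ∑ j, if i < j ∧ G.Adj i j then w i j * x i j else 0

/-- `ip(G,w)`: maximum of `∑_{ij ∈ E} w_ij x_i x_j` over `x ∈ {±1}^V`. -/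
def ipVal (G : SimpleGraph V) (w : V → V → ℝ) : ℝ :=
  sSup {t | ∃ x : V → ℝ, (∀ i, x i = 1 ∨ x i = -1) ∧
    t = edgeSum G w (fun i j => x i * x j)}

/-- `sdp(G,w)`: maximum of `∑_{ij ∈ E} w_ij ⟪u_i,u_j⟫` over unit vectors. -/
def sdpVal (G : SimpleGraph V) (w : V → V → ℝ) : ℝ :=
  sSup {t | ∃ u : V → EuclideanSpace ℝ V, (∀ i, ‖u i‖ = 1) ∧
    t = edgeSum G w (fun i j => (inner ℝ (u i) (u j) : ℝ))}

/-- The Grothendieck constant `κ(G) = sup_w sdp(G,w)/ip(G,w)`. -/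
def kappaVal (G : SimpleGraph V) : ℝ :=
  sSup {t | ∃ w : V → V → ℝ, t = sdpVal G w / ipVal G w}

/-- The elliptope: PSD matrices with unit diagonal. -/
def elliptope (V : Type*) [Fintype V] : Set (Matrix V V ℝ) :=
  {X | X.PosSemidef ∧ ∀ i, X i i = 1}

/-- The cut polytope: convex hull of rank-one ±1 correlation matrices. -/
def cutPolytope (V : Type*) [Fintype V] : Set (Matrix V V ℝ) :=
  convexHull ℝ {X | ∃ x : V → ℝ, (∀ i, x i = 1 ∨ x i = -1) ∧
    X = Matrix.of fun i j => x i * x j}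

/-- Projection of a matrix onto the edge set of `G`. -/
def projE (G : SimpleGraph V) (X : Matrix V V ℝ) : V → V → ℝ :=
  fun i j => if G.Adj i j then X i j else 0

/-- `𝓔(G)`: projection of the elliptope onto the edge set of `G`. -/
def ellG (G : SimpleGraph V) : Set (V → V → ℝ) := projE G '' elliptope V

/-- `CUT(G)`: projection of the cut polytope onto the edge set of `G`. -/
def cutG (G : SimpleGraph V) : Set (V → V → ℝ) := projE G '' cutPolytope V

end
/-- The cycle graph `C_n` on `Fin n`, with edges `(i, i+1 mod n)`. -/
def cycleGraph (n : ℕ) : SimpleGraph (Fin n) :=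
  SimpleGraph.fromRel (fun i j => j.val = (i.val + 1) % n)

open scoped RealInnerProductSpace

/-!
Split every edge weight of `C_n` as `c_k = σ_k |c_k|` with signs `σ_k = ±1`. Switching vertex
signs realises any edge sign pattern with `∏ σ_k = 1`, so in that case `ip = sdp = ∑ |c_k|`.
If `∏ σ_k = -1`, flipping the sign of the lightest edge `e` gives `ip ≥ ∑ |c_k| - 2 |c_e|`. On the
vector side, switching turns the unit vectors into a walk from `y₀` to `-y₀`, whose `n` angles
add up to at least `π`; as `cos` is concave on `[0, π/2]` (after averaging the largest angle with
another one), the inner products along a signed odd cycle sum to at most `n cos (π / n)`.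
Spending this on the uniform part `|c_e|` of the weights and the trivial bound on the rest gives
`sdp ≤ n cos (π / n) / (n - 2) · ip`. Equality holds for the weights `+1, …, +1, -1`, where
`ip = n - 2` and consecutive vertices of a regular `2n`-gon give `sdp ≥ n cos (π / n)`.
-/

lemma cos_add_cos_le_two_mul_cos_half {a b : ℝ} (h₀ : 0 ≤ a + b) (hπ : a + b ≤ π) :
    cos a + cos b ≤ 2 * cos ((a + b) / 2) := by
  have : 0 ≤ cos ((a + b) / 2) := cos_nonneg_of_mem_Icc ⟨by linarith, by linarith⟩
  rw [cos_add_cos]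
  nlinarith [cos_le_one ((a - b) / 2)]

lemma sum_cos_le_card_mul_cos_mean {ι : Type*} [Fintype ι] [Nonempty ι] (β : ι → ℝ)
    (hβ : ∀ i, β i ∈ Set.Icc (-(π / 2)) (π / 2)) :
    ∑ i, cos (β i) ≤ Fintype.card ι * cos ((∑ i, β i) / Fintype.card ι) := by
  have hn : (0 : ℝ) < Fintype.card ι := by exact_mod_cast Fintype.card_pos
  have h := strictConcaveOn_cos_Icc.concaveOn.le_map_sum (t := univ)
    (w := fun _ => (Fintype.card ι : ℝ)⁻¹) (p := β) (fun _ _ => by positivity)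
    (by simp [card_univ, hn.ne']) (fun i _ => hβ i)
  simp only [smul_eq_mul, ← mul_sum] at h
  rwa [inv_mul_eq_div, inv_mul_eq_div, div_le_iff₀' hn] at h

lemma add_le_sum_of_ne {ι : Type*} [Fintype ι] {f : ι → ℝ} (hf : ∀ i, 0 ≤ f i) {i j : ι}
    (hij : i ≠ j) : f i + f j ≤ ∑ k, f k := by
  classical
  rw [← sum_pair hij]
  exact sum_le_sum_of_subset_of_nonneg (subset_univ _) fun k _ _ => hf k

theorem sum_cos_le_of_sum_eq_pi {ι : Type*} [Fintype ι] [Nontrivial ι] (β : ι → ℝ)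
    (h₀ : ∀ i, 0 ≤ β i) (hsum : ∑ i, β i = π) :
    ∑ i, cos (β i) ≤ Fintype.card ι * cos (π / Fintype.card ι) := by
  classical
  obtain ⟨j, -, hj⟩ := exists_max_image univ β univ_nonempty
  obtain ⟨i, hij⟩ := exists_ne j
  have hpair : ∀ {k l}, k ≠ l → β k + β l ≤ π := fun hkl => hsum ▸ add_le_sum_of_ne h₀ hkl
  set μ := (β i + β j) / 2
  -- Averaging the largest angle with another one leaves every angle in `[0, π/2]`,
  -- where `cos` is concave.
  set γ : ι → ℝ := fun k => if k = i ∨ k = j then μ else β k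
  have split : ∀ g : ι → ℝ, ∑ k, g k = g i + g j + ∑ k ∈ {i, j}ᶜ, g k := fun g => by
    rw [← sum_pair hij, sum_add_sum_compl]
  have hrest : ∀ g : ℝ → ℝ, ∑ k ∈ {i, j}ᶜ, g (γ k) = ∑ k ∈ {i, j}ᶜ, g (β k) :=
    fun g => sum_congr rfl fun k hk => by
      simp only [mem_compl, mem_insert, mem_singleton] at hk
      simp only [γ, if_neg hk]
  have hγsum : ∑ k, γ k = π := by
    rw [← hsum, split γ, split β, hrest fun x => x]
    simp [γ, μ]
  have hγ : ∀ k, γ k ∈ Set.Icc (-(π / 2)) (π / 2) := by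
    intro k
    have := pi_pos
    by_cases hk : k = i ∨ k = j
    · simp only [γ, if_pos hk, μ]
      constructor <;> linarith [h₀ i, h₀ j, hpair hij]
    · push Not at hk
      simp only [γ, if_neg (not_or.mpr hk)]
      constructor <;> linarith [h₀ k, hj k (mem_univ k), hpair hk.2]
  calc ∑ k, cos (β k) ≤ ∑ k, cos (γ k) := by
        rw [split fun k => cos (β k), split fun k => cos (γ k), hrest cos]
        simp only [γ, true_or, or_true, if_true]
        linarith [cos_add_cos_le_two_mul_cos_half (add_nonneg (h₀ i) (h₀ j)) (hpair hij)]
    _ ≤ Fintype.card ι * cos (π / Fintype.card ι) := by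
        simpa [hγsum] using sum_cos_le_card_mul_cos_mean γ hγ

theorem sum_cos_le_of_pi_le_sum {ι : Type*} [Fintype ι] [Nontrivial ι] (α : ι → ℝ)
    (h₀ : ∀ i, 0 ≤ α i) (hπ : ∀ i, α i ≤ π) (hsum : π ≤ ∑ i, α i) :
    ∑ i, cos (α i) ≤ Fintype.card ι * cos (π / Fintype.card ι) := by
  have hS : 0 < ∑ i, α i := lt_of_lt_of_le pi_pos hsum
  have hr₀ : 0 ≤ π / ∑ i, α i := by positivity
  have hr₁ : π / ∑ i, α i ≤ 1 := (div_le_one hS).mpr hsum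
  calc ∑ i, cos (α i) ≤ ∑ i, cos (α i * (π / ∑ i, α i)) :=
        sum_le_sum fun i _ => cos_le_cos_of_nonneg_of_le_pi (mul_nonneg (h₀ i) hr₀) (hπ i)
          (mul_le_of_le_one_right (h₀ i) hr₁)
    _ ≤ _ := sum_cos_le_of_sum_eq_pi _ (fun i => mul_nonneg (h₀ i) hr₀) (by
        rw [← sum_mul, mul_div_cancel₀ _ hS.ne'])

lemma sub_two_le_mul_cos_pi_div {x : ℝ} (hx : 3 ≤ x) : x - 2 ≤ x * cos (π / x) := by
  have hx₀ : 0 < x := by linarith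
  have hsq : (π / x) ^ 2 / 2 ≤ 2 / x := by
    have hπ : π ^ 2 ≤ 4 * x := by nlinarith [pi_lt_d2, pi_pos]
    rw [div_pow, div_div, div_le_div_iff₀ (by positivity) hx₀]
    nlinarith
  calc x - 2 = x * (1 - 2 / x) := by field_simp
    _ ≤ x * cos (π / x) := by
      gcongr
      linarith [one_sub_sq_div_two_le_cos (x := π / x)]

lemma mul_eq_one_or_eq_neg_one {s t : ℝ} (hs : s = 1 ∨ s = -1) (ht : t = 1 ∨ t = -1) :
    s * t = 1 ∨ s * t = -1 := by
  rcases hs with rfl | rfl <;> rcases ht with rfl | rfl <;> norm_num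

lemma abs_le_one_of_eq_one_or_eq_neg_one {s : ℝ} (hs : s = 1 ∨ s = -1) : |s| ≤ 1 := by
  rcases hs with rfl | rfl <;> norm_num

lemma prod_eq_one_or_eq_neg_one {ι : Type*} (s : Finset ι) {ε : ι → ℝ}
    (hε : ∀ k, ε k = 1 ∨ ε k = -1) : ∏ k ∈ s, ε k = 1 ∨ ∏ k ∈ s, ε k = -1 :=
  prod_induction _ (fun r : ℝ => r = 1 ∨ r = -1) (fun _ _ => mul_eq_one_or_eq_neg_one) (Or.inl rfl)
    fun k _ => hε k

lemma exists_sign_mul_eq_abs {ι : Type*} (c : ι → ℝ) :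
    ∃ σ : ι → ℝ, (∀ k, σ k = 1 ∨ σ k = -1) ∧ ∀ k, σ k * c k = |c k| := by
  refine ⟨fun k => if 0 ≤ c k then 1 else -1, fun k => by dsimp only; split_ifs <;> simp,
    fun k => ?_⟩
  dsimp only
  split_ifs with h
  · rw [one_mul, abs_of_nonneg h]
  · rw [neg_one_mul, abs_of_neg (not_le.mp h)]

lemma sum_le_card_sub_two {ι : Type*} [Fintype ι] {ε : ι → ℝ} (hε : ∀ k, ε k = 1 ∨ ε k = -1)
    (hodd : ∏ k, ε k = -1) : ∑ k, ε k ≤ Fintype.card ι - 2 := by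
  classical
  obtain ⟨e, he⟩ : ∃ e, ε e = -1 := by
    by_contra! h
    have : ∏ k, ε k = 1 := prod_eq_one fun k _ => (hε k).resolve_right (h k)
    linarith
  rw [← add_sum_erase _ _ (mem_univ e), he]
  have hrest : ∑ k ∈ univ.erase e, ε k ≤ ∑ k ∈ univ.erase e, (1 : ℝ) :=
    sum_le_sum fun k _ => by rcases hε k with h | h <;> linarith
  rw [sum_const, card_erase_of_mem (mem_univ e), card_univ, nsmul_one,
    Nat.cast_pred (Fintype.card_pos_iff.mpr ⟨e⟩)] at hrest
  linarith

/-- Switching: a sign pattern on the edges of the cycle `0 → 1 → ⋯ → m → 0` is induced by a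
sign pattern on its vertices except at the closing edge, where a defect `∏ ε` remains. -/
lemma exists_vertex_signs {m : ℕ} (ε : Fin (m + 1) → ℝ) (hε : ∀ k, ε k = 1 ∨ ε k = -1) :
    ∃ s : Fin (m + 1) → ℝ, (∀ k, s k = 1 ∨ s k = -1) ∧
      (∀ j : Fin m, s j.castSucc * s j.succ = ε j.castSucc) ∧
      s (Fin.last m) * s 0 = (∏ k, ε k) * ε (Fin.last m) := by
  have hs : ∀ k, Fin.partialProd (fun j : Fin m => ε j.castSucc) k = 1 ∨
      Fin.partialProd (fun j : Fin m => ε j.castSucc) k = -1 := fun k => by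
    induction k using Fin.induction with
    | zero => simp
    | succ j ih => rw [Fin.partialProd_succ]; exact mul_eq_one_or_eq_neg_one ih (hε _)
  refine ⟨_, hs, fun j => ?_, ?_⟩
  · rw [Fin.partialProd_succ, ← mul_assoc, mul_self_eq_one_iff.mpr (hs _), one_mul]
  · simp only [Fin.partialProd, Fin.val_last, List.take_of_length_le (List.length_ofFn).le,
      List.prod_ofFn, Fin.val_zero, List.take_zero, List.prod_nil, Fin.prod_univ_castSucc]
    rw [mul_one, mul_assoc, mul_self_eq_one_iff.mpr (hε _), mul_one]

lemma mul_le_abs_of_abs_le_one {a b : ℝ} (hb : |b| ≤ 1) : a * b ≤ |a| :=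
  calc a * b ≤ |a| * |b| := by rw [← abs_mul]; exact le_abs_self _
    _ ≤ |a| := mul_le_of_le_one_right (abs_nonneg a) hb

section InnerProductSpace

variable {E : Type*} [NormedAddCommGroup E] [InnerProductSpace ℝ E]

open InnerProductGeometry

lemma angle_le_sum_angle_succ {m : ℕ} (y : Fin (m + 1) → E) (hy : y 0 ≠ 0) :
    angle (y 0) (y (Fin.last m)) ≤ ∑ j : Fin m, angle (y j.castSucc) (y j.succ) := by
  induction m with
  | zero => simp [angle_self hy]
  | succ m ih =>
    rw [Fin.sum_univ_castSucc]
    have := ih (fun k => y k.castSucc) hy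
    simp only [Fin.castSucc_zero, ← Fin.succ_castSucc] at this
    rw [Fin.succ_last]
    linarith [angle_le_angle_add_angle (y 0) (y (Fin.last m).castSucc) (y (Fin.last (m + 1)))]

/-- Read `y (m + 1) := -y 0`: the walk `y 0, …, y m, -y 0` turns by a total angle `≥ π`. -/
lemma sum_inner_sub_inner_le {m : ℕ} (hm : 1 ≤ m) (y : Fin (m + 1) → E) (hy : ∀ k, ‖y k‖ = 1) :
    ∑ j : Fin m, ⟪y j.castSucc, y j.succ⟫ - ⟪y (Fin.last m), y 0⟫ ≤
      (m + 1) * cos (π / (m + 1)) := by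
  have : Nontrivial (Fin (m + 1)) := Fin.nontrivial_iff_two_le.mpr (by omega)
  set α : Fin (m + 1) → ℝ :=
    Fin.lastCases (angle (y (Fin.last m)) (-y 0)) fun j => angle (y j.castSucc) (y j.succ)
  have hy0 : y 0 ≠ 0 := norm_ne_zero_iff.mp (by simp [hy])
  have hsum : π ≤ ∑ k, α k := by
    have : angle (y (Fin.last m)) (-y 0) = π - angle (y 0) (y (Fin.last m)) := by
      rw [angle_neg_right, angle_comm]
    simp only [α, Fin.sum_univ_castSucc, Fin.lastCases_castSucc, Fin.lastCases_last, this]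
    linarith [angle_le_sum_angle_succ y hy0]
  have hα : ∀ k, 0 ≤ α k ∧ α k ≤ π := fun k => by
    induction k using Fin.lastCases <;> simp [α, angle_nonneg, angle_le_pi]
  have h := sum_cos_le_of_pi_le_sum α (fun k => (hα k).1) (fun k => (hα k).2) hsum
  simp only [α, Fin.sum_univ_castSucc, Fin.lastCases_castSucc, Fin.lastCases_last,
    ← inner_eq_cos_angle_of_norm_eq_one (hy _) (hy _),
    ← inner_eq_cos_angle_of_norm_eq_one (hy _) (norm_neg (y 0) ▸ hy 0), inner_neg_right,
    Fintype.card_fin] at h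
  push_cast at h
  linarith

theorem sum_sign_mul_inner_le {m : ℕ} (hm : 1 ≤ m) (u : Fin (m + 1) → E) (hu : ∀ k, ‖u k‖ = 1)
    (ε : Fin (m + 1) → ℝ) (hε : ∀ k, ε k = 1 ∨ ε k = -1) (hodd : ∏ k, ε k = -1) :
    ∑ k, ε k * ⟪u k, u (k + 1)⟫ ≤ (m + 1) * cos (π / (m + 1)) := by
  obtain ⟨s, hs, hpath, hclose⟩ := exists_vertex_signs ε hε
  have hy : ∀ k, ‖s k • u k‖ = 1 := fun k => by
    rcases hs k with h | h <;> simp [h, hu]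
  have hinner : ∀ k l, ⟪s k • u k, s l • u l⟫ = s k * s l * ⟪u k, u l⟫ := fun k l => by
    rw [real_inner_smul_left, real_inner_smul_right]; ring
  have h := sum_inner_sub_inner_le hm (fun k => s k • u k) hy
  have hlast : ε (Fin.last m) = -(s (Fin.last m) * s 0) := by rw [hclose, hodd]; ring
  simp only [hinner] at h
  rw [Fin.sum_univ_castSucc]
  simp only [Fin.coeSucc_eq_succ, Fin.last_add_one, ← hpath, hlast]
  linarith

lemma abs_inner_le_one {u v : E} (hu : ‖u‖ = 1) (hv : ‖v‖ = 1) : |⟪u, v⟫| ≤ 1 := by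
  simpa [hu, hv] using abs_real_inner_le_norm u v

lemma inner_cos_smul_add_sin_smul {e₀ e₁ : E} (h₀ : ‖e₀‖ = 1) (h₁ : ‖e₁‖ = 1) (h : ⟪e₀, e₁⟫ = 0)
    (a b : ℝ) : ⟪cos a • e₀ + sin a • e₁, cos b • e₀ + sin b • e₁⟫ = cos (a - b) := by
  simp only [inner_add_left, inner_add_right, real_inner_smul_left, real_inner_smul_right,
    real_inner_self_eq_norm_sq, h₀, h₁, real_inner_comm e₀ e₁, h, cos_sub]
  ring

lemma sum_mul_inner_le_of_prod_sign_eq_neg_one {m : ℕ} (hm : 1 ≤ m) {u : Fin (m + 1) → E}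
    (hu : ∀ k, ‖u k‖ = 1) {c σ : Fin (m + 1) → ℝ} (hσ : ∀ k, σ k = 1 ∨ σ k = -1)
    (hσc : ∀ k, σ k * c k = |c k|) (hodd : ∏ k, σ k = -1) {e : Fin (m + 1)}
    (he : ∀ k, |c e| ≤ |c k|) :
    ∑ k, c k * ⟪u k, u (k + 1)⟫ ≤
      ∑ k, |c k| - (m + 1) * |c e| + |c e| * ((m + 1) * cos (π / (m + 1))) := by
  have hc : ∀ k, c k = σ k * |c k| := fun k => by
    rw [← hσc, ← mul_assoc, mul_self_eq_one_iff.mpr (hσ k), one_mul]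
  have hσu : ∀ k, |σ k * ⟪u k, u (k + 1)⟫| ≤ 1 := fun k => by
    rw [abs_mul]
    exact mul_le_one₀ (abs_le_one_of_eq_one_or_eq_neg_one (hσ k)) (abs_nonneg _)
      (abs_inner_le_one (hu k) (hu (k + 1)))
  -- the uniform part `|c e|` of the weights sees the odd cycle, the rest is bounded edgewise
  calc ∑ k, c k * ⟪u k, u (k + 1)⟫
      = ∑ k, (|c k| - |c e|) * (σ k * ⟪u k, u (k + 1)⟫) +
          |c e| * ∑ k, σ k * ⟪u k, u (k + 1)⟫ := by
        rw [mul_sum, ← sum_add_distrib]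
        exact sum_congr rfl fun k _ => by linear_combination ⟪u k, u (k + 1)⟫ * hc k
    _ ≤ ∑ k, |(|c k| - |c e|)| + |c e| * ((m + 1) * cos (π / (m + 1))) :=
        add_le_add (sum_le_sum fun k _ => mul_le_abs_of_abs_le_one (hσu k))
          (mul_le_mul_of_nonneg_left (sum_sign_mul_inner_le hm u hu σ hσ hodd) (abs_nonneg _))
    _ = _ := by
        simp only [abs_of_nonneg (sub_nonneg.mpr (he _)), sum_sub_distrib, sum_const, card_univ,
          Fintype.card_fin, nsmul_eq_mul]
        push_cast
        ring

end InnerProductSpace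

section EdgeSum

variable {V : Type*} [Fintype V] [LinearOrder V] (G : SimpleGraph V) (w : V → V → ℝ)

lemma edgeSum_le_sum_abs {f : V → V → ℝ} (hf : ∀ i j, |f i j| ≤ 1) :
    edgeSum G w f ≤ ∑ i, ∑ j, |w i j| :=
  sum_le_sum fun i _ => sum_le_sum fun j _ => by
    split_ifs
    exacts [mul_le_abs_of_abs_le_one (hf i j), abs_nonneg _]

lemma le_ipVal {x : V → ℝ} (hx : ∀ i, x i = 1 ∨ x i = -1) :
    edgeSum G w (fun i j => x i * x j) ≤ ipVal G w := by
  refine le_csSup ⟨∑ i, ∑ j, |w i j|, ?_⟩ ⟨x, hx, rfl⟩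
  rintro _ ⟨y, hy, rfl⟩
  exact edgeSum_le_sum_abs G w fun i j =>
    abs_le_one_of_eq_one_or_eq_neg_one (mul_eq_one_or_eq_neg_one (hy i) (hy j))

lemma ipVal_le {B : ℝ} (hB : 0 ≤ B) (h : ∀ x : V → ℝ, (∀ i, x i = 1 ∨ x i = -1) →
    edgeSum G w (fun i j => x i * x j) ≤ B) : ipVal G w ≤ B :=
  Real.sSup_le (by rintro _ ⟨x, hx, rfl⟩; exact h x hx) hB

lemma le_sdpVal {u : V → EuclideanSpace ℝ V} (hu : ∀ i, ‖u i‖ = 1) :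
    edgeSum G w (fun i j => ⟪u i, u j⟫) ≤ sdpVal G w := by
  refine le_csSup ⟨∑ i, ∑ j, |w i j|, ?_⟩ ⟨u, hu, rfl⟩
  rintro _ ⟨v, hv, rfl⟩
  exact edgeSum_le_sum_abs G w fun i j => abs_inner_le_one (hv i) (hv j)

lemma sdpVal_le {B : ℝ} (hB : 0 ≤ B) (h : ∀ u : V → EuclideanSpace ℝ V, (∀ i, ‖u i‖ = 1) →
    edgeSum G w (fun i j => ⟪u i, u j⟫) ≤ B) : sdpVal G w ≤ B :=
  Real.sSup_le (by rintro _ ⟨u, hu, rfl⟩; exact h u hu) hB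

end EdgeSum

section Cycle

variable {m : ℕ}

lemma cycleGraph_adj {i j : Fin (m + 1)} :
    (cycleGraph (m + 1)).Adj i j ↔ i ≠ j ∧ (j = i + 1 ∨ i = j + 1) := by
  simp [cycleGraph, SimpleGraph.fromRel_adj, Fin.ext_iff, Fin.val_add]

lemma self_ne_add_one (hm : 1 ≤ m) (k : Fin (m + 1)) : k ≠ k + 1 := by
  rw [Ne, left_eq_add, Fin.one_eq_zero_iff]; omega

lemma not_add_one_and_add_one (hm : 2 ≤ m) (i j : Fin (m + 1)) : ¬(j = i + 1 ∧ i = j + 1) := by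
  rintro ⟨rfl, h⟩
  rw [add_assoc, left_eq_add, Fin.ext_iff] at h
  simp [Fin.val_add, Nat.mod_eq_of_lt (by omega : 1 < m + 1)] at h
  rw [Nat.mod_eq_of_lt (by omega)] at h
  omega

-- `edgeSum` reads the weight of an edge `{i, j}` as `w i j` with `i < j`.
def cycleWeight (w : Fin (m + 1) → Fin (m + 1) → ℝ) (k : Fin (m + 1)) : ℝ :=
  w (min k (k + 1)) (max k (k + 1))

lemma edgeSum_cycleGraph (hm : 2 ≤ m) (w f : Fin (m + 1) → Fin (m + 1) → ℝ)
    (hf : ∀ i j, f i j = f j i) :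
    edgeSum (cycleGraph (m + 1)) w f = ∑ k, cycleWeight w k * f k (k + 1) := by
  have hsplit : ∀ i j : Fin (m + 1),
      (if i < j ∧ (cycleGraph (m + 1)).Adj i j then w i j * f i j else 0) =
        (if j = i + 1 then (if i < j then w i j * f i j else 0) else 0) +
          (if i = j + 1 then (if i < j then w i j * f i j else 0) else 0) := fun i j => by
    by_cases h : i < j
    · have hadj : (cycleGraph (m + 1)).Adj i j ↔ j = i + 1 ∨ i = j + 1 := by
        rw [cycleGraph_adj]; exact and_iff_right h.ne
      by_cases h₁ : j = i + 1
      · have h₂ : ¬i = j + 1 := fun h₂ => not_add_one_and_add_one hm i j ⟨h₁, h₂⟩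
        rw [if_pos ⟨h, hadj.mpr (Or.inl h₁)⟩, if_pos h₁, if_pos h, if_neg h₂, add_zero]
      · rw [if_neg h₁, zero_add]
        by_cases h₂ : i = j + 1
        · rw [if_pos ⟨h, hadj.mpr (Or.inr h₂)⟩, if_pos h₂, if_pos h]
        · rw [if_neg (fun hP => (hadj.mp hP.2).elim h₁ h₂), if_neg h₂]
    · simp [h]
  simp only [edgeSum, hsplit, sum_add_distrib, Fintype.sum_ite_eq']
  rw [sum_comm (f := fun i j => if i = j + 1 then _ else 0)]
  simp only [Fintype.sum_ite_eq', ← sum_add_distrib]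
  refine sum_congr rfl fun k _ => ?_
  rcases (self_ne_add_one (by omega) k).lt_or_gt with h | h
  · rw [if_pos h, if_neg h.not_gt, cycleWeight, min_eq_left h.le, max_eq_right h.le, add_zero]
  · rw [if_neg h.not_gt, if_pos h, cycleWeight, min_eq_right h.le, max_eq_left h.le, zero_add,
      hf]

lemma cycleWeight_surjective (hm : 2 ≤ m) : Function.Surjective (cycleWeight (m := m)) := by
  refine fun c => ⟨fun i j => if j = i + 1 then c i else c j, funext fun k => ?_⟩
  rcases (self_ne_add_one (by omega) k).lt_or_gt with h | h
  · simp [cycleWeight, min_eq_left h.le, max_eq_right h.le]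
  · have : ¬k = k + 1 + 1 := fun h' => not_add_one_and_add_one hm k (k + 1) ⟨rfl, h'⟩
    simp [cycleWeight, min_eq_right h.le, max_eq_left h.le, this]

lemma le_ipVal_cycleGraph (hm : 2 ≤ m) (w : Fin (m + 1) → Fin (m + 1) → ℝ)
    {ε : Fin (m + 1) → ℝ} (hε : ∀ k, ε k = 1 ∨ ε k = -1) (heven : ∏ k, ε k = 1) :
    ∑ k, cycleWeight w k * ε k ≤ ipVal (cycleGraph (m + 1)) w := by
  obtain ⟨x, hx, hpath, hclose⟩ := exists_vertex_signs ε hε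
  have hxε : ∀ k, x k * x (k + 1) = ε k := Fin.lastCases
    (by rwa [Fin.last_add_one, ← one_mul (ε _), ← heven])
    fun j => by rw [Fin.coeSucc_eq_succ, hpath]
  have := le_ipVal (cycleGraph (m + 1)) w hx
  rwa [edgeSum_cycleGraph hm _ _ fun i j => mul_comm _ _,
    Fintype.sum_congr _ _ fun k => by rw [hxε]] at this

lemma sum_abs_sub_two_mul_le_ipVal_cycleGraph (hm : 2 ≤ m) (w : Fin (m + 1) → Fin (m + 1) → ℝ)
    {σ : Fin (m + 1) → ℝ} (hσ : ∀ k, σ k = 1 ∨ σ k = -1)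
    (hσc : ∀ k, σ k * cycleWeight w k = |cycleWeight w k|) (hodd : ∏ k, σ k = -1)
    (e : Fin (m + 1)) :
    ∑ k, |cycleWeight w k| - 2 * |cycleWeight w e| ≤ ipVal (cycleGraph (m + 1)) w := by
  set ε : Fin (m + 1) → ℝ := fun k => σ k * if k = e then -1 else 1
  have hε : ∀ k, ε k = 1 ∨ ε k = -1 := fun k =>
    mul_eq_one_or_eq_neg_one (hσ k) (by split_ifs <;> simp)
  have heven : ∏ k, ε k = 1 := by
    simp only [ε, prod_mul_distrib, hodd, Fintype.prod_ite_eq', mul_neg, mul_one, neg_neg]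
  have hsum : ∀ k, cycleWeight w k * ε k =
      |cycleWeight w k| - if k = e then 2 * |cycleWeight w k| else 0 := fun k => by
    simp only [ε, ← hσc k]
    split_ifs <;> ring
  have := le_ipVal_cycleGraph hm w hε heven
  simpa only [hsum, sum_sub_distrib, Fintype.sum_ite_eq'] using this

lemma sdpVal_cycleGraph_le (hm : 2 ≤ m) (w : Fin (m + 1) → Fin (m + 1) → ℝ) {B : ℝ} (hB : 0 ≤ B)
    (h : ∀ u : Fin (m + 1) → EuclideanSpace ℝ (Fin (m + 1)), (∀ k, ‖u k‖ = 1) →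
      ∑ k, cycleWeight w k * ⟪u k, u (k + 1)⟫ ≤ B) :
    sdpVal (cycleGraph (m + 1)) w ≤ B :=
  sdpVal_le _ _ hB fun u hu => by
    rw [edgeSum_cycleGraph hm _ _ fun i j => real_inner_comm _ _]
    exact h u hu

theorem sdpVal_le_mul_ipVal_cycleGraph (hm : 2 ≤ m) (w : Fin (m + 1) → Fin (m + 1) → ℝ) :
    0 ≤ ipVal (cycleGraph (m + 1)) w ∧ sdpVal (cycleGraph (m + 1)) w ≤
      (m + 1) * cos (π / (m + 1)) / (m - 1) * ipVal (cycleGraph (m + 1)) w := by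
  set c := cycleWeight w
  set C : ℝ := (m + 1) * cos (π / (m + 1))
  have hm₂ : (2 : ℝ) ≤ m := by exact_mod_cast hm
  have hC : (m : ℝ) - 1 ≤ C := by linarith [sub_two_le_mul_cos_pi_div (x := m + 1) (by linarith)]
  have hρ : 1 ≤ C / (m - 1) := (one_le_div (by linarith)).mpr hC
  obtain ⟨σ, hσ, hσc⟩ := exists_sign_mul_eq_abs c
  rcases prod_eq_one_or_eq_neg_one univ hσ with heven | hodd
  · have hip : ∑ k, |c k| ≤ ipVal (cycleGraph (m + 1)) w :=
      calc ∑ k, |c k| = ∑ k, c k * σ k := sum_congr rfl fun k _ => by rw [mul_comm, hσc]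
        _ ≤ ipVal (cycleGraph (m + 1)) w := le_ipVal_cycleGraph hm w hσ heven
    have hip₀ : 0 ≤ ipVal (cycleGraph (m + 1)) w :=
      (sum_nonneg fun k _ => abs_nonneg (c k)).trans hip
    refine ⟨hip₀, sdpVal_cycleGraph_le hm w (mul_nonneg (by linarith) hip₀) fun u hu => ?_⟩
    calc ∑ k, c k * ⟪u k, u (k + 1)⟫ ≤ ∑ k, |c k| :=
          sum_le_sum fun k _ => mul_le_abs_of_abs_le_one (abs_inner_le_one (hu _) (hu _))
      _ ≤ ipVal (cycleGraph (m + 1)) w := hip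
      _ ≤ C / (m - 1) * ipVal (cycleGraph (m + 1)) w :=
          le_mul_of_one_le_left hip₀ hρ
  · obtain ⟨e, -, he⟩ := exists_min_image univ (fun k => |c k|) univ_nonempty
    have hip := sum_abs_sub_two_mul_le_ipVal_cycleGraph hm w hσ hσc hodd e
    have hAe : (m + 1) * |c e| ≤ ∑ k, |c k| := by
      simpa using card_nsmul_le_sum univ (fun k => |c k|) _ he
    have hip₀ : 0 ≤ ipVal (cycleGraph (m + 1)) w := by nlinarith [abs_nonneg (c e)]
    refine ⟨hip₀, sdpVal_cycleGraph_le hm w (mul_nonneg (by linarith) hip₀) fun u hu => ?_⟩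
    calc ∑ k, c k * ⟪u k, u (k + 1)⟫ ≤ ∑ k, |c k| - (m + 1) * |c e| + |c e| * C :=
          sum_mul_inner_le_of_prod_sign_eq_neg_one (by omega) hu hσ hσc hodd
            fun k => he k (mem_univ k)
      _ ≤ C / (m - 1) * (∑ k, |c k| - 2 * |c e|) := by
          rw [div_mul_eq_mul_div, le_div_iff₀ (by linarith)]
          nlinarith [mul_nonneg (sub_nonneg.mpr hC) (sub_nonneg.mpr hAe)]
      _ ≤ C / (m - 1) * ipVal (cycleGraph (m + 1)) w := by gcongr

lemma ipVal_cycleGraph_of_cycleWeight_eq (hm : 2 ≤ m) {w : Fin (m + 1) → Fin (m + 1) → ℝ}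
    (hw : cycleWeight w = fun k => if k = Fin.last m then -1 else 1) :
    ipVal (cycleGraph (m + 1)) w = m - 1 := by
  have hw₁ : ∀ k, cycleWeight w k = 1 ∨ cycleWeight w k = -1 := fun k => by
    simp only [hw]; split_ifs <;> simp
  have hprod : ∏ k, cycleWeight w k = -1 := by simp [hw]
  have hm₂ : (2 : ℝ) ≤ m := by exact_mod_cast hm
  refine le_antisymm (ipVal_le _ _ (by linarith) fun x hx => ?_) ?_
  · rw [edgeSum_cycleGraph hm _ _ fun i j => mul_comm _ _]
    have hx₂ : ∏ k, x (k + 1) = ∏ k, x k := Equiv.prod_comp (Equiv.addRight 1) x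
    have hodd : ∏ k, cycleWeight w k * (x k * x (k + 1)) = -1 := by
      rw [prod_mul_distrib, prod_mul_distrib, hx₂, hprod,
        mul_self_eq_one_iff.mpr (prod_eq_one_or_eq_neg_one univ hx), mul_one]
    have := sum_le_card_sub_two (fun k => mul_eq_one_or_eq_neg_one (hw₁ k)
      (mul_eq_one_or_eq_neg_one (hx k) (hx (k + 1)))) hodd
    rw [Fintype.card_fin] at this
    push_cast at this
    linarith
  · have := le_ipVal (cycleGraph (m + 1)) w (x := fun _ => 1) fun _ => Or.inl rfl
    rw [edgeSum_cycleGraph hm _ _ fun i j => mul_comm _ _, hw] at this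
    simpa [Fin.sum_univ_castSucc, Fin.castSucc_ne_last] using this

lemma le_sdpVal_cycleGraph_of_cycleWeight_eq (hm : 2 ≤ m) {w : Fin (m + 1) → Fin (m + 1) → ℝ}
    (hw : cycleWeight w = fun k => if k = Fin.last m then -1 else 1) :
    (m + 1) * cos (π / (m + 1)) ≤ sdpVal (cycleGraph (m + 1)) w := by
  set θ : ℝ := π / (m + 1)
  -- consecutive vertices of a regular `2 (m + 1)`-gon, so `u m` is at angle `θ` from `-u 0`
  set u : Fin (m + 1) → EuclideanSpace ℝ (Fin (m + 1)) := fun k =>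
    cos (k * θ) • EuclideanSpace.single 0 1 + sin (k * θ) • EuclideanSpace.single 1 1
  have h01 : (0 : Fin (m + 1)) ≠ 1 := by simpa using self_ne_add_one (by omega) (0 : Fin (m + 1))
  have hu : ∀ k l, ⟪u k, u l⟫ = cos (k * θ - l * θ) := fun k l =>
    inner_cos_smul_add_sin_smul (by simp) (by simp)
      (by simp [EuclideanSpace.inner_single_left, h01]) _ _
  have hu₁ : ∀ k, ‖u k‖ = 1 := fun k => by
    have := hu k k
    rw [sub_self, cos_zero, real_inner_self_eq_norm_sq] at this
    exact (pow_eq_one_iff_of_nonneg (norm_nonneg _) two_ne_zero).mp this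
  have := le_sdpVal (cycleGraph (m + 1)) w hu₁
  rw [edgeSum_cycleGraph hm _ _ fun i j => real_inner_comm _ _, hw] at this
  refine le_trans (le_of_eq ?_) this
  have hmθ : (m : ℝ) * θ = π - θ := by
    rw [eq_sub_iff_add_eq, ← add_one_mul, mul_div_cancel₀ _ (by positivity)]
  simp [hu, Fin.sum_univ_castSucc, Fin.castSucc_ne_last, Fin.coeSucc_eq_succ, hmθ, add_mul]

lemma sdpVal_div_ipVal_cycleGraph_le (hm : 2 ≤ m) (w : Fin (m + 1) → Fin (m + 1) → ℝ) :
    sdpVal (cycleGraph (m + 1)) w / ipVal (cycleGraph (m + 1)) w ≤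
      (m + 1) * cos (π / (m + 1)) / (m - 1) := by
  obtain ⟨hip, hsdp⟩ := sdpVal_le_mul_ipVal_cycleGraph hm w
  have hm₂ : (2 : ℝ) ≤ m := by exact_mod_cast hm
  have hC := sub_two_le_mul_cos_pi_div (x := m + 1) (by linarith)
  exact div_le_of_le_mul₀ hip (div_nonneg (by linarith) (by linarith)) hsdp

end Cycle

/-- `κ(C_n) = (n/(n-2))·cos(π/n)` for `n ≥ 3`. -/
theorem kappa_cycle (n : ℕ) (hn : 3 ≤ n) :
    kappaVal (cycleGraph n) = ((n : ℝ) / ((n : ℝ) - 2)) * Real.cos (π / n) := by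
  obtain ⟨m, rfl⟩ : ∃ m, n = m + 1 := ⟨n - 1, by omega⟩
  have hm : 2 ≤ m := by omega
  have hm₂ : (2 : ℝ) ≤ m := by exact_mod_cast hm
  have hρ : ((↑(m + 1) : ℝ) / (↑(m + 1) - 2)) * cos (π / ↑(m + 1)) =
      (m + 1) * cos (π / (m + 1)) / (m - 1) := by
    push_cast
    ring
  have hbdd : ∀ t ∈ {t | ∃ w, t = sdpVal (cycleGraph (m + 1)) w / ipVal (cycleGraph (m + 1)) w},
      t ≤ (m + 1) * cos (π / (m + 1)) / (m - 1) := by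
    rintro _ ⟨w, rfl⟩
    exact sdpVal_div_ipVal_cycleGraph_le hm w
  obtain ⟨w₀, hw₀⟩ := cycleWeight_surjective hm fun k => if k = Fin.last m then -1 else 1
  rw [kappaVal, hρ]
  refine le_antisymm (csSup_le ⟨_, w₀, rfl⟩ hbdd) (le_csSup_of_le ⟨_, hbdd⟩ ⟨w₀, rfl⟩ ?_)
  rw [ipVal_cycleGraph_of_cycleWeight_eq hm hw₀, div_le_div_iff_of_pos_right (by linarith)]
  exact le_sdpVal_cycleGraph_of_cycleWeight_eq hm hw₀
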